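/- Let f(z) = (r(R−r))/((1−r²)\bar z) + ((1−rR)z)/(1−r²) with 0 < r < 1 and r < R < 1. Then f is a diffeomorphism of the closed annulus \overline{A(r,1)} onto \overline{A(R,1)} (in particular its Jacobian J(z,f) = |f_z|² − |f_{\bar z}|² is positive on \overline{A(r,1)}) if and only if R < 2r/(1+r²). -/

import Mathlib

/-!
Off the origin `f z = a / conj z + b z` with `a = r(R - r)/(1 - r²)` and `b = (1 - rR)/(1 - r²)`,
both positive. Hence `f_z = b` and `f_{z̄} = -a / conj z²`, so the Jacobian `b² - a²/|z|⁴` is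
positive exactly where `a < b |z|²`; on the annulus the worst case is `|z| = r`, where this
condition reads `R(1 + r²) < 2r`. Moreover `f z = (g |z| / |z|) z` is radial with profile
`g s = b s + a / s`, `g r = R`, `g 1 = 1`, and `a < b r²` makes `g` strictly increasing on
`[r, 1]`, so `f` maps the annulus `r ≤ |z| ≤ 1` bijectively onto `R ≤ |w| ≤ 1`.
-/

/-- The Wirtinger derivative `f_z` of `f : ℂ → ℂ`, via the real Fréchet derivative. -/
noncomputable def wirtingerZ (f : ℂ → ℂ) (z : ℂ) : ℂ :=
  (fderiv ℝ f z 1 - Complex.I * fderiv ℝ f z Complex.I) / 2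

/-- The Wirtinger derivative `f_{z̄}` of `f : ℂ → ℂ`. -/
noncomputable def wirtingerZbar (f : ℂ → ℂ) (z : ℂ) : ℂ :=
  (fderiv ℝ f z 1 + Complex.I * fderiv ℝ f z Complex.I) / 2

open Complex ComplexConjugate Set Filter Topology

section Wirtinger

variable {f : ℂ → ℂ} {z α β : ℂ}

theorem HasFDerivAt.wirtingerZ_eq
    (h : HasFDerivAt f (α • ContinuousLinearMap.id ℝ ℂ + β • conjCLE.toContinuousLinearMap) z) :
    wirtingerZ f z = α := by
  simp only [wirtingerZ, h.fderiv, add_apply, smul_apply, ContinuousLinearMap.id_apply, smul_eq_mul,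
    mul_one, ContinuousLinearEquiv.coe_coe, ContinuousAlgEquiv.coeCLE_apply, conjCAE_apply, map_one,
    conj_I, mul_neg]
  linear_combination (β - α) / 2 * I_sq

theorem HasFDerivAt.wirtingerZbar_eq
    (h : HasFDerivAt f (α • ContinuousLinearMap.id ℝ ℂ + β • conjCLE.toContinuousLinearMap) z) :
    wirtingerZbar f z = β := by
  simp only [wirtingerZbar, h.fderiv, add_apply, smul_apply, ContinuousLinearMap.id_apply, smul_eq_mul,
    mul_one, ContinuousLinearEquiv.coe_coe, ContinuousAlgEquiv.coeCLE_apply, conjCAE_apply, map_one,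
    conj_I, mul_neg]
  linear_combination (α - β) / 2 * I_sq

theorem hasFDerivAt_conj_inv (hz : z ≠ 0) :
    HasFDerivAt (fun w : ℂ => (conj w)⁻¹)
      ((-(conj z ^ 2)⁻¹ : ℂ) • conjCLE.toContinuousLinearMap) z := by
  have hcz : conj z ≠ 0 := (map_ne_zero _).mpr hz
  refine (((hasDerivAt_inv hcz).hasFDerivAt.restrictScalars ℝ).comp z
    conjCLE.toContinuousLinearMap.hasFDerivAt).congr_fderiv (ContinuousLinearMap.ext fun w => ?_)
  simp [mul_comm]

theorem hasFDerivAt_mul_conj_inv_add_mul (a b : ℂ) (hz : z ≠ 0) :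
    HasFDerivAt (fun w : ℂ => a * (conj w)⁻¹ + b * w)
      (b • ContinuousLinearMap.id ℝ ℂ + (-a / conj z ^ 2) • conjCLE.toContinuousLinearMap) z := by
  refine (((hasFDerivAt_conj_inv hz).const_mul a).add ((hasFDerivAt_id z).const_mul b)).congr_fderiv
    (ContinuousLinearMap.ext fun w => ?_)
  simp only [add_apply, smul_apply, ContinuousLinearEquiv.coe_coe, ContinuousAlgEquiv.coeCLE_apply,
    conjCAE_apply, smul_eq_mul, neg_mul, mul_neg, ContinuousLinearMap.id_apply]
  ring

end Wirtinger

theorem Complex.inv_conj_eq_inv_sq_norm_mul (z : ℂ) : (conj z)⁻¹ = ((‖z‖ ^ 2)⁻¹ : ℝ) * z := by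
  rw [inv_def, conj_conj, normSq_conj, normSq_eq_norm_sq, mul_comm]

theorem wirtinger_jacobian_pos_iff_of_eventuallyEq {f : ℂ → ℂ} {a b : ℝ} {z : ℂ} (hz : z ≠ 0)
    (ha : 0 ≤ a) (hb : 0 ≤ b) (hf : f =ᶠ[𝓝 z] fun w => a * (conj w)⁻¹ + b * w) :
    0 < ‖wirtingerZ f z‖ ^ 2 - ‖wirtingerZbar f z‖ ^ 2 ↔ a < b * ‖z‖ ^ 2 := by
  have hF := (hasFDerivAt_mul_conj_inv_add_mul (a : ℂ) b hz).congr_of_eventuallyEq hf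
  have hz' : 0 < ‖z‖ := norm_pos_iff.2 hz
  rw [hF.wirtingerZ_eq, hF.wirtingerZbar_eq, sub_pos]
  simp only [Complex.norm_div, norm_neg, norm_real, Real.norm_eq_abs, abs_of_nonneg ha, norm_pow,
    RCLike.norm_conj, abs_of_nonneg hb]
  rw [pow_lt_pow_iff_left₀ (by positivity) hb two_ne_zero, div_lt_iff₀ (by positivity)]

theorem mul_conj_inv_add_mul_eq_smul (a b : ℝ) {z : ℂ} (hz : z ≠ 0) :
    a * (conj z)⁻¹ + b * z = ((b * ‖z‖ + a / ‖z‖) / ‖z‖) • z := by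
  have : (‖z‖ : ℂ) ≠ 0 := by exact_mod_cast norm_ne_zero_iff.2 hz
  rw [inv_conj_eq_inv_sq_norm_mul, real_smul]
  push_cast
  field_simp
  ring

theorem bijOn_annulus_of_radial {E : Type*} [NormedAddCommGroup E] [NormedSpace ℝ E]
    {f : E → E} {h : ℝ → ℝ} {r₁ r₂ : ℝ} (hr₁ : 0 < r₁) (hr₁₂ : r₁ ≤ r₂)
    (hmono : StrictMonoOn h (Icc r₁ r₂)) (hcont : ContinuousOn h (Icc r₁ r₂)) (hpos : 0 < h r₁)
    (hf : ∀ z : E, r₁ ≤ ‖z‖ → ‖z‖ ≤ r₂ → f z = (h ‖z‖ / ‖z‖) • z) :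
    BijOn f {z | r₁ ≤ ‖z‖ ∧ ‖z‖ ≤ r₂} {w | h r₁ ≤ ‖w‖ ∧ ‖w‖ ≤ h r₂} := by
  have hle : ∀ {s}, s ∈ Icc r₁ r₂ → h r₁ ≤ h s ∧ h s ≤ h r₂ := fun hs =>
    ⟨hmono.monotoneOn (left_mem_Icc.2 hr₁₂) hs hs.1,
      hmono.monotoneOn hs (right_mem_Icc.2 hr₁₂) hs.2⟩
  have hnorm : ∀ z ∈ {z : E | r₁ ≤ ‖z‖ ∧ ‖z‖ ≤ r₂}, ‖f z‖ = h ‖z‖ := by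
    rintro z ⟨hz₁, hz₂⟩
    have hz : 0 < ‖z‖ := hr₁.trans_le hz₁
    have hhz : 0 < h ‖z‖ := hpos.trans_le (hle ⟨hz₁, hz₂⟩).1
    rw [hf z hz₁ hz₂, norm_smul, Real.norm_of_nonneg (by positivity), div_mul_cancel₀ _ hz.ne']
  refine ⟨fun z hz => ?_, fun z hz z' hz' hzz' => ?_, fun w ⟨hw₁, hw₂⟩ => ?_⟩
  · rw [mem_ofPred_eq, hnorm z hz]
    exact hle hz
  · have hnorm_eq : ‖z‖ = ‖z'‖ :=
      hmono.injOn hz hz' (by rw [← hnorm z hz, ← hnorm z' hz', hzz'])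
    have hc : h ‖z‖ / ‖z‖ ≠ 0 :=
      (div_pos (hpos.trans_le (hle hz).1) (hr₁.trans_le hz.1)).ne'
    rw [hf z hz.1 hz.2, hf z' hz'.1 hz'.2, ← hnorm_eq] at hzz'
    exact smul_right_injective E hc hzz'
  · obtain ⟨s, hs, hhs⟩ := intermediate_value_Icc hr₁₂ hcont ⟨hw₁, hw₂⟩
    have hs₀ : 0 < s := hr₁.trans_le hs.1
    have hw : 0 < ‖w‖ := hpos.trans_le hw₁
    have hz : ‖(s / ‖w‖) • w‖ = s := by
      rw [norm_smul, Real.norm_of_nonneg (by positivity), div_mul_cancel₀ _ hw.ne']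
    have hmem : r₁ ≤ ‖(s / ‖w‖) • w‖ ∧ ‖(s / ‖w‖) • w‖ ≤ r₂ := by rw [hz]; exact hs
    refine ⟨(s / ‖w‖) • w, hmem, ?_⟩
    rw [hf _ hmem.1 hmem.2, hz, hhs, smul_smul,
      div_mul_div_cancel₀ hs₀.ne', div_self hw.ne', one_smul]

theorem strictMonoOn_mul_add_div {a b r : ℝ} (ha : 0 ≤ a) (hr : 0 < r) (hab : a < b * r ^ 2) :
    StrictMonoOn (fun s => b * s + a / s) (Ici r) := by
  intro s hs t ht hst
  have hs₀ : 0 < s := hr.trans_le hs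
  have ht₀ : 0 < t := hs₀.trans hst
  have hb : 0 < b := by nlinarith
  have hst_lt : a < b * (s * t) := hab.trans_le (by gcongr; nlinarith [mem_Ici.1 hs, mem_Ici.1 ht])
  have hdiff : b * t + a / t - (b * s + a / s) = (t - s) * (b * (s * t) - a) / (s * t) := by
    field_simp; ring
  have hpos := div_pos (mul_pos (sub_pos.2 hst) (sub_pos.2 hst_lt)) (mul_pos hs₀ ht₀)
  show b * s + a / s < b * t + a / t
  linarith

section AnnulusMap

variable {f : ℂ → ℂ} {a b r₁ r₂ : ℝ}

theorem wirtinger_jacobian_pos_on_annulus_iff (hr₁ : 0 < r₁) (hr₁₂ : r₁ ≤ r₂) (ha : 0 ≤ a)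
    (hb : 0 ≤ b) (hf : ∀ z : ℂ, z ≠ 0 → f z = a * (conj z)⁻¹ + b * z) :
    (∀ z : ℂ, r₁ ≤ ‖z‖ → ‖z‖ ≤ r₂ → 0 < ‖wirtingerZ f z‖ ^ 2 - ‖wirtingerZbar f z‖ ^ 2) ↔
      a < b * r₁ ^ 2 := by
  have hjac (z : ℂ) (hz : r₁ ≤ ‖z‖) :
      0 < ‖wirtingerZ f z‖ ^ 2 - ‖wirtingerZbar f z‖ ^ 2 ↔ a < b * ‖z‖ ^ 2 :=
    have hz₀ : z ≠ 0 := norm_pos_iff.1 (hr₁.trans_le hz)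
    wirtinger_jacobian_pos_iff_of_eventuallyEq hz₀ ha hb ((eventually_ne_nhds hz₀).mono hf)
  constructor
  · intro hpos
    have hr : ‖(r₁ : ℂ)‖ = r₁ := by simp [hr₁.le]
    simpa [hr] using (hjac r₁ hr.ge).1 (hpos r₁ hr.ge (hr.trans_le hr₁₂))
  · exact fun hab z hz₁ _ => (hjac z hz₁).2 (hab.trans_le (by gcongr))

theorem bijOn_annulus_of_mul_conj_inv_add_mul (hr₁ : 0 < r₁) (hr₁₂ : r₁ ≤ r₂) (ha : 0 ≤ a)
    (hab : a < b * r₁ ^ 2) (hf : ∀ z : ℂ, z ≠ 0 → f z = a * (conj z)⁻¹ + b * z) :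
    BijOn f {z | r₁ ≤ ‖z‖ ∧ ‖z‖ ≤ r₂}
      {w | b * r₁ + a / r₁ ≤ ‖w‖ ∧ ‖w‖ ≤ b * r₂ + a / r₂} := by
  have hb : 0 < b := by nlinarith
  refine bijOn_annulus_of_radial hr₁ hr₁₂
    ((strictMonoOn_mul_add_div ha hr₁ hab).mono Icc_subset_Ici_self)
    (by fun_prop (disch := exact fun s hs => (hr₁.trans_le hs.1).ne')) (by positivity)
    fun z hz _ => ?_
  have hz₀ : z ≠ 0 := norm_pos_iff.1 (hr₁.trans_le hz)
  rw [hf z hz₀, mul_conj_inv_add_mul_eq_smul a b hz₀]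

end AnnulusMap

theorem stmt_12 (r R : ℝ) (hr0 : 0 < r) (hr1 : r < 1) (hrR : r < R) (hR1 : R < 1)
    (f : ℂ → ℂ)
    (hf : ∀ z : ℂ, z ≠ 0 →
      f z = ((r : ℂ) * ((R : ℂ) - r)) / ((1 - (r : ℂ) ^ 2) * (starRingEnd ℂ) z) +
        ((1 - (r : ℂ) * R) * z) / (1 - (r : ℂ) ^ 2)) :
    (Set.BijOn f {z : ℂ | r ≤ ‖z‖ ∧ ‖z‖ ≤ 1} {w : ℂ | R ≤ ‖w‖ ∧ ‖w‖ ≤ 1} ∧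
      ∀ z : ℂ, r ≤ ‖z‖ → ‖z‖ ≤ 1 →
        0 < ‖wirtingerZ f z‖ ^ 2 - ‖wirtingerZbar f z‖ ^ 2) ↔
    R < 2 * r / (1 + r ^ 2) := by
  have h1r : 0 < 1 - r ^ 2 := by nlinarith
  set a : ℝ := r * (R - r) / (1 - r ^ 2) with ha_def
  set b : ℝ := (1 - r * R) / (1 - r ^ 2) with hb_def
  have ha : 0 < a := div_pos (by nlinarith) h1r
  have hb : 0 < b := div_pos (by nlinarith) h1r
  have hfab : ∀ z : ℂ, z ≠ 0 → f z = a * (conj z)⁻¹ + b * z := by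
    intro z hz
    have : conj z ≠ 0 := (map_ne_zero _).2 hz
    have : (1 - (r : ℂ) ^ 2) ≠ 0 := by exact_mod_cast h1r.ne'
    rw [hf z hz, ha_def, hb_def]
    push_cast
    field_simp
  have hcond : R < 2 * r / (1 + r ^ 2) ↔ a < b * r ^ 2 := by
    rw [lt_div_iff₀ (by positivity), ha_def, hb_def, div_mul_eq_mul_div,
      div_lt_div_iff_of_pos_right h1r]
    constructor <;> intro <;> nlinarith
  have hg_r : b * r + a / r = R := by rw [ha_def, hb_def]; field_simp; ring
  have hg_1 : b * 1 + a / 1 = 1 := by rw [ha_def, hb_def]; field_simp; ring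
  have hjac := wirtinger_jacobian_pos_on_annulus_iff hr0 hr1.le ha.le hb.le hfab
  have hbij (hab : a < b * r ^ 2) := bijOn_annulus_of_mul_conj_inv_add_mul hr0 hr1.le ha.le hab hfab
  rw [hg_r, hg_1] at hbij
  rw [hcond, ← hjac]
  exact ⟨And.right, fun hpos => ⟨hbij (hjac.1 hpos), hpos⟩⟩
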